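/- Let β > 0 and let w be one of the two admissible weights, and let Ω(n) denote the number of prime factors of n counted with multiplicity. For every ε > 0 there is no constant C such that every 2-homogeneous Dirichlet series g(s) = ∑_{Ω(n)=2} b_n n^{−s} satisfies ‖T_g‖_{L(H²_w)} ≤ C (∑_{Ω(n)=2} |b_n|² (log n)/(log log n)^{1+ε})^{1/2}. Equivalently: for all ε > 0 and C > 0 there exist complex coefficients (b_n) supported on {n : Ω(n) = 2} with ∑_{Ω(n)=2}|b_n|²(log n)(log log n)^{−1−ε} < ∞, and a finitely supported sequence (a_n), such that ∑_{n≥2} w(n)^{−1}(log n)^{−2} |∑_{k|n, k≥2} (log k) b_k a_{n/k}|² > C² (∑_{Ω(n)=2} |b_n|² (log n)(log log n)^{−1−ε}) · ∑_{n≥1} |a_n|²/w(n). -/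

import Mathlib

/-!
Pick `d` primes `Q`, all at most `d²` (possible for infinitely many `d` because `∑ 1/p`
diverges), put `N = ∏ Q` and take a prime `P ∈ (N, 2N]`. The symbol `b = 1` on `{P q : q ∈ Q}`
is 2-homogeneous, and since `log (P q) ≍ d log d` its weighted norm is `≲ d² / (log d)^ε`.
The weight of a product of `k` distinct primes is `(1 + δ)^k`, so the indicator `a` of the
products of `j = ⌊d/2⌋` primes of `Q` has `‖a‖² = C(d, j) (1 + δ)^{-j}`. At `n = P ∏ T` with
`|T| = j + 1` the coefficient of `T_g f` is `∑_{q ∈ T} log (P q) ≥ (j + 1) log P`, while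
`log n ≤ 2 log P`; hence `‖T_g f‖² ≥ C(d, j+1) (j+1)² / (4 (1+δ)^{j+2}) ≍ d² ‖a‖²`, and the
ratio of the two sides of the bound grows like `(log d)^ε`.
-/

open scoped ENNReal

/-- The generalized divisor function `d_γ(n)`, multiplicative with
`d_γ(p^r) = γ(γ+1)⋯(γ+r−1)/r!`. -/
noncomputable def dCoef (γ : ℝ) (n : ℕ) : ℝ :=
  n.factorization.prod fun _ r => (∏ i ∈ Finset.range r, (γ + i)) / (r.factorial : ℝ)

/-- `w` is one of the two admissible weights for the parameter `β`, with associated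
exponent `δ`: either `w(n) = d(n)^β` with `δ = 2^β − 1`, or `w(n) = d_{β+1}(n)`
with `δ = β`. -/
def IsAdmissible (β : ℝ) (w : ℕ → ℝ) (δ : ℝ) : Prop :=
  ((w = fun n => ((n.divisors.card : ℝ)) ^ β) ∧ δ = (2 : ℝ) ^ β - 1) ∨
  (w = dCoef (β + 1) ∧ δ = β)

/-- `∑_{n≥2} w(n)⁻¹ (log n)⁻² |∑_{k∣n, k≥2} (log k) b_k a_{n/k}|²`, the square of the
`H²_w`-norm of `T_g f` where `g, f` have coefficients `b, a`. -/
noncomputable def volterraSumLHS (w : ℕ → ℝ) (b a : ℕ → ℂ) : ℝ≥0∞ :=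
  ∑' n : ℕ, if 2 ≤ n then
    ENNReal.ofReal
      (‖∑ k ∈ n.divisors.filter (fun k => 2 ≤ k),
          (Real.log k : ℂ) * b k * a (n / k)‖ ^ 2 / (w n * Real.log n ^ 2))
  else 0

/-- The squared norm `∑_{n≥1} |a_n|²/w(n)` in `H²_w`. -/
noncomputable def hNorm2 (w : ℕ → ℝ) (a : ℕ → ℂ) : ℝ≥0∞ :=
  ∑' n : ℕ, if 1 ≤ n then ENNReal.ofReal (‖a n‖ ^ 2 / w n) else 0

/-- The Volterra operator with symbol `g(s) = ∑_{n≥2} b_n n^{−s}` is bounded on `H²_w`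
with norm at most `C`. -/
def VolterraBounded (w : ℕ → ℝ) (b : ℕ → ℂ) (C : ℝ) : Prop :=
  ∀ a : ℕ → ℂ, volterraSumLHS w b a ≤ ENNReal.ofReal (C ^ 2) * hNorm2 w a

/-- The coefficients `b` are supported on integers all of whose prime factors lie among
the first `d` primes (the class `𝒟_d`). -/
def SmoothSupport (d : ℕ) (b : ℕ → ℂ) : Prop :=
  ∀ n, b n ≠ 0 → ∀ p, p.Prime → p ∣ n → ∃ j < d, p = Nat.nth Nat.Prime j

open Filter Finset

namespace Nat

lemma factorization_prod_primes_of_mem {T : Finset ℕ} (hT : ∀ p ∈ T, p.Prime) {p : ℕ}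
    (hp : p ∈ T) : (∏ q ∈ T, q).factorization p = 1 := by
  rw [factorization_prod_apply fun q hq => (hT q hq).ne_zero,
    Finset.sum_eq_single_of_mem p hp fun q hq hqp => by
      rw [(hT q hq).factorization, Finsupp.single_eq_of_ne' hqp]]
  exact (hT p hp).factorization_self

lemma prod_primes_ne_zero {T : Finset ℕ} (hT : ∀ p ∈ T, p.Prime) : ∏ p ∈ T, p ≠ 0 :=
  prod_ne_zero_iff.2 fun p hp => (hT p hp).ne_zero

lemma card_divisors_prod_primes {T : Finset ℕ} (hT : ∀ p ∈ T, p.Prime) :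
    (∏ p ∈ T, p).divisors.card = 2 ^ T.card := by
  rw [card_divisors (prod_primes_ne_zero hT), primeFactors_prod hT,
    Finset.prod_congr rfl fun p hp => by rw [factorization_prod_primes_of_mem hT hp],
    prod_const]

lemma prod_primes_injOn : Set.InjOn (fun T : Finset ℕ => ∏ p ∈ T, p) {T | ∀ p ∈ T, p.Prime} :=
  fun _ hT _ hT' h => by rw [← primeFactors_prod hT, ← primeFactors_prod hT']; exact congrArg _ h

lemma frequently_nth_prime_le_sq : ∃ᶠ n in atTop, nth Nat.Prime n ≤ (n + 1) ^ 2 := by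
  intro hlarge
  have hsum : Summable fun n => (1 : ℝ) / nth Nat.Prime n := by
    refine Summable.of_norm_bounded_eventually_nat (g := fun n : ℕ => 1 / ((n : ℝ) + 1) ^ 2)
      ?_ ?_
    · exact_mod_cast (summable_nat_add_iff 1).mpr
        (Real.summable_one_div_nat_pow.mpr one_lt_two)
    · filter_upwards [hlarge] with n hn
      rw [Real.norm_of_nonneg (by positivity)]
      gcongr
      exact_mod_cast (not_le.mp hn).le
  refine Nat.Primes.not_summable_one_div ?_
  have hinj : Function.Injective fun p : Nat.Primes => count Nat.Prime p :=
    fun p q h => Subtype.ext <| by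
      simpa [nth_count p.2, nth_count q.2] using congrArg (nth Nat.Prime) h
  refine (hsum.comp_injective hinj).congr fun p => ?_
  simp [nth_count p.2]

lemma frequently_exists_primes_le_sq :
    ∃ᶠ d in atTop, ∃ Q : Finset ℕ, (∀ q ∈ Q, q.Prime) ∧ Q.card = d ∧ ∀ q ∈ Q, q ≤ d ^ 2 := by
  refine (tendsto_add_atTop_nat 1).frequently (frequently_nth_prime_le_sq.mono fun n hn => ?_)
  refine ⟨(range (n + 1)).image (nth Nat.Prime), ?_, ?_, ?_⟩
  · simp only [mem_image]
    rintro _ ⟨i, -, rfl⟩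
    exact prime_nth_prime i
  · rw [Finset.card_image_of_injective _ (nth_injective infinite_setOfPred_prime), card_range]
  · simp only [mem_image, mem_range]
    rintro _ ⟨i, hi, rfl⟩
    exact (nth_monotone infinite_setOfPred_prime (Nat.lt_succ_iff.mp hi)).trans hn

end Nat

lemma dCoef_prod_primes (γ : ℝ) {T : Finset ℕ} (hT : ∀ p ∈ T, p.Prime) :
    dCoef γ (∏ p ∈ T, p) = γ ^ T.card := by
  rw [dCoef, Finsupp.prod, Nat.support_factorization, Nat.primeFactors_prod hT,
    Finset.prod_congr rfl fun p hp => by rw [Nat.factorization_prod_primes_of_mem hT hp],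
    prod_const]
  simp

namespace IsAdmissible

variable {β δ : ℝ} {w : ℕ → ℝ}

lemma weight_prod_primes (hw : IsAdmissible β w δ) {T : Finset ℕ} (hT : ∀ p ∈ T, p.Prime) :
    w (∏ p ∈ T, p) = (1 + δ) ^ T.card := by
  rcases hw with ⟨rfl, rfl⟩ | ⟨rfl, rfl⟩
  · dsimp only
    rw [add_sub_cancel, Nat.card_divisors_prod_primes hT, Nat.cast_pow, Nat.cast_two,
      ← Real.rpow_natCast, ← Real.rpow_mul zero_le_two, mul_comm, Real.rpow_mul zero_le_two,
      Real.rpow_natCast]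
  · rw [dCoef_prod_primes _ hT, add_comm]

lemma one_add_pos (hw : IsAdmissible β w δ) (hβ : -1 < β) : 0 < 1 + δ := by
  rcases hw with ⟨-, rfl⟩ | ⟨-, rfl⟩
  · simpa using Real.rpow_pos_of_pos two_pos β
  · linarith

end IsAdmissible

open Real in
lemma log_div_log_log_rpow_le {d x ε : ℝ} (hd : 4 ≤ d) (hε : 0 ≤ 1 + ε)
    (hlow : d * log 2 ≤ log x) (hup : log x ≤ 6 * d * log d) :
    log x / log (log x) ^ (1 + ε) ≤ 12 * d / (log d / 2) ^ ε := by
  have hlogd : 0 < log d / 2 := by have := log_pos (by linarith : (1 : ℝ) < d); positivity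
  have hsqrt : √d ≤ d * log 2 := by
    have h2 : 2 ≤ √d := (le_sqrt zero_le_two (by linarith)).2 (by linarith)
    nlinarith [log_two_gt_d9, mul_self_sqrt (by linarith : (0 : ℝ) ≤ d)]
  have hloglog : log d / 2 ≤ log (log x) := by
    rw [← log_sqrt (by linarith)]
    exact log_le_log (sqrt_pos.2 (by linarith)) (hsqrt.trans hlow)
  calc log x / log (log x) ^ (1 + ε)
      ≤ 6 * d * log d / (log d / 2) ^ (1 + ε) :=
        div_le_div₀ (by nlinarith) hup (by positivity) (rpow_le_rpow hlogd.le hloglog hε)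
    _ = 12 * d / (log d / 2) ^ ε := by
        have : log d ≠ 0 := by linarith
        rw [rpow_add hlogd, rpow_one]
        field_simp
        ring

lemma sq_mul_choose_half_le (d : ℕ) :
    d ^ 2 * d.choose (d / 2) ≤ 4 * (d.choose (d / 2 + 1) * (d / 2 + 1) ^ 2) := by
  have hsplit : d ^ 2 ≤ 4 * ((d - d / 2) * (d / 2 + 1)) := by
    have := Nat.mul_le_mul (by omega : d ≤ 2 * (d - d / 2)) (by omega : d ≤ 2 * (d / 2 + 1))
    nlinarith
  calc d ^ 2 * d.choose (d / 2) ≤ 4 * ((d - d / 2) * (d / 2 + 1)) * d.choose (d / 2) := by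
        gcongr
    _ = 4 * (d.choose (d / 2) * (d - d / 2) * (d / 2 + 1)) := by ring
    _ = 4 * (d.choose (d / 2 + 1) * (d / 2 + 1) ^ 2) := by
        rw [← Nat.choose_succ_right_eq]
        ring

lemma mul_choose_half_div_lt_choose_succ_div {C c X : ℝ} {d : ℕ} (hd : 1 ≤ d) (hc : 0 < c)
    (hX : 192 * C ^ 2 * c ^ 2 < X) :
    C ^ 2 * (12 * d ^ 2 / X) * (d.choose (d / 2) / c ^ (d / 2))
      < d.choose (d / 2 + 1) * ((d / 2 : ℕ) + 1) ^ 2 / (4 * c ^ (d / 2 + 2)) := by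
  have hX0 : 0 < X := lt_of_le_of_lt (by positivity) hX
  have hmain : 0 < (d : ℝ) ^ 2 * d.choose (d / 2) / (16 * c ^ (d / 2 + 2)) := by
    have := Nat.choose_pos (Nat.div_le_self d 2)
    have : (1 : ℝ) ≤ d := by exact_mod_cast hd
    positivity
  have hchoose : (d : ℝ) ^ 2 * d.choose (d / 2) ≤
      4 * (d.choose (d / 2 + 1) * ((d / 2 : ℕ) + 1) ^ 2) := by
    exact_mod_cast sq_mul_choose_half_le d
  calc C ^ 2 * (12 * d ^ 2 / X) * (d.choose (d / 2) / c ^ (d / 2))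
      = (d : ℝ) ^ 2 * d.choose (d / 2) / (16 * c ^ (d / 2 + 2)) * (192 * C ^ 2 * c ^ 2 / X) := by
        field_simp
        ring
    _ < (d : ℝ) ^ 2 * d.choose (d / 2) / (16 * c ^ (d / 2 + 2)) :=
        mul_lt_of_lt_one_right hmain ((div_lt_one hX0).2 hX)
    _ ≤ d.choose (d / 2 + 1) * ((d / 2 : ℕ) + 1) ^ 2 / (4 * c ^ (d / 2 + 2)) := by
        rw [div_le_div_iff₀ (by positivity) (by positivity)]
        nlinarith [pow_pos hc (d / 2 + 2)]

noncomputable def symbolNorm2 (ε : ℝ) (b : ℕ → ℂ) : ℝ≥0∞ :=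
  ∑' n : ℕ, if n.primeFactorsList.length = 2 then
    ENNReal.ofReal (‖b n‖ ^ 2 * Real.log n / (Real.log (Real.log n)) ^ (1 + ε)) else 0

noncomputable def volterraCoeff (b a : ℕ → ℂ) (n : ℕ) : ℂ :=
  ∑ k ∈ n.divisors.filter (fun k => 2 ≤ k), (Real.log k : ℂ) * b k * a (n / k)

lemma hNorm2_indicator_one (w : ℕ → ℝ) {s : Finset ℕ} (hs : 0 ∉ s) :
    hNorm2 w ((s : Set ℕ).indicator 1) = ∑ n ∈ s, ENNReal.ofReal (w n)⁻¹ := by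
  rw [hNorm2, tsum_eq_sum (s := s) fun n hn => by simp [hn]]
  refine Finset.sum_congr rfl fun n hn => ?_
  rw [if_pos (Nat.one_le_iff_ne_zero.2 fun h => hs (h ▸ hn))]
  simp [hn]

lemma symbolNorm2_indicator_one (ε : ℝ) {s : Finset ℕ}
    (hs : ∀ n ∈ s, n.primeFactorsList.length = 2) :
    symbolNorm2 ε ((s : Set ℕ).indicator 1) =
      ∑ n ∈ s, ENNReal.ofReal (Real.log n / (Real.log (Real.log n)) ^ (1 + ε)) := by
  rw [symbolNorm2, tsum_eq_sum (s := s) fun n hn => by simp [hn]]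
  refine Finset.sum_congr rfl fun n hn => ?_
  rw [if_pos (hs n hn)]
  simp [hn]

lemma sum_le_volterraSumLHS {ι : Type*} (w : ℕ → ℝ) (b a : ℕ → ℂ) {s : Finset ι} {g : ι → ℕ}
    (hg : Set.InjOn g s) (hs : ∀ i ∈ s, 2 ≤ g i) :
    ∑ i ∈ s, ENNReal.ofReal (‖volterraCoeff b a (g i)‖ ^ 2 / (w (g i) * Real.log (g i) ^ 2))
      ≤ volterraSumLHS w b a := by
  rw [volterraSumLHS]
  calc _ = ∑ n ∈ s.image g, if 2 ≤ n then
          ENNReal.ofReal (‖volterraCoeff b a n‖ ^ 2 / (w n * Real.log n ^ 2)) else 0 := by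
        rw [Finset.sum_image hg]
        exact Finset.sum_congr rfl fun i hi => (if_pos (hs i hi)).symm
    _ ≤ _ := ENNReal.sum_le_tsum _

noncomputable def testSymbol (P : ℕ) (Q : Finset ℕ) : ℕ → ℂ :=
  (↑(Q.image (P * ·)) : Set ℕ).indicator 1

noncomputable def testFunction (Q : Finset ℕ) (j : ℕ) : ℕ → ℂ :=
  (↑((Q.powersetCard j).image fun T => ∏ p ∈ T, p) : Set ℕ).indicator 1

section TestPair

variable {Q : Finset ℕ}

lemma primeFactorsList_length_eq_two_of_mem_image (hQ : ∀ q ∈ Q, q.Prime) {P : ℕ}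
    (hP : P.Prime) :
    ∀ n ∈ Q.image (P * ·), n.primeFactorsList.length = 2 := by
  simp only [Finset.mem_image, forall_exists_index, and_imp, forall_apply_eq_imp_iff₂]
  intro q hq
  rw [← ArithmeticFunction.cardFactors_apply, ArithmeticFunction.cardFactors_mul hP.ne_zero
    (hQ q hq).ne_zero, ArithmeticFunction.cardFactors_apply_prime hP,
    ArithmeticFunction.cardFactors_apply_prime (hQ q hq)]

lemma hNorm2_testFunction (hQ : ∀ q ∈ Q, q.Prime) {β δ : ℝ} {w : ℕ → ℝ}
    (hw : IsAdmissible β w δ) (j : ℕ) :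
    hNorm2 w (testFunction Q j) = ENNReal.ofReal (Q.card.choose j / (1 + δ) ^ j) := by
  have hprimes : ∀ T ∈ Q.powersetCard j, ∀ p ∈ T, p.Prime :=
    fun T hT p hp => hQ p ((Finset.mem_powersetCard.1 hT).1 hp)
  rw [testFunction, hNorm2_indicator_one w, Finset.sum_image
      fun T hT T' hT' h => Nat.prod_primes_injOn (hprimes T hT) (hprimes T' hT') h,
    Finset.sum_congr rfl fun T hT => by
      rw [hw.weight_prod_primes (hprimes T hT), (Finset.mem_powersetCard.1 hT).2],
    Finset.sum_const, Finset.card_powersetCard, nsmul_eq_mul, div_eq_mul_inv,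
    ENNReal.ofReal_mul (Nat.cast_nonneg _), ENNReal.ofReal_natCast]
  simp only [Finset.mem_image, not_exists, not_and]
  exact fun T hT => Nat.prod_primes_ne_zero (hprimes T hT)

open Real in
lemma symbolNorm2_testSymbol_le (hQ : ∀ q ∈ Q, q.Prime) (hd : 4 ≤ Q.card)
    (hQsq : ∀ q ∈ Q, q ≤ Q.card ^ 2) {P : ℕ} (hP : P.Prime) (hNP : ∏ q ∈ Q, q < P)
    (hPN : P ≤ 2 * ∏ q ∈ Q, q) {ε : ℝ} (hε : 0 ≤ 1 + ε) :
    symbolNorm2 ε (testSymbol P Q) ≤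
      ENNReal.ofReal (12 * Q.card ^ 2 / (log Q.card / 2) ^ ε) := by
  set d := Q.card with hd_def
  have hd4 : (4 : ℝ) ≤ d := by exact_mod_cast hd
  have hlogd : log 2 ≤ log d := log_le_log two_pos (by linarith)
  have hterm : ∀ q ∈ Q, log (P * q : ℕ) / log (log (P * q : ℕ)) ^ (1 + ε)
      ≤ 12 * d / (log d / 2) ^ ε := by
    intro q hq
    have hqpos := (hQ q hq).pos
    have hlow : 2 ^ d ≤ P * q := calc
      2 ^ d ≤ ∏ q ∈ Q, q := Finset.pow_card_le_prod _ _ _ fun q hq => (hQ q hq).two_le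
      _ ≤ P * q := hNP.le.trans (Nat.le_mul_of_pos_right P hqpos)
    have hup : P * q ≤ 2 * d ^ (4 * d) := by
      have hN : ∏ q ∈ Q, q ≤ d ^ (2 * d) := by
        rw [pow_mul]; exact Finset.prod_le_pow_card _ _ _ hQsq
      calc P * q ≤ (2 * ∏ q ∈ Q, q) * ∏ q ∈ Q, q :=
            Nat.mul_le_mul hPN (Nat.le_of_dvd (Nat.pos_of_ne_zero (Nat.prod_primes_ne_zero hQ))
              (Finset.dvd_prod_of_mem _ hq))
        _ ≤ 2 * d ^ (2 * d) * d ^ (2 * d) := by gcongr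
        _ = 2 * d ^ (4 * d) := by ring
    refine log_div_log_log_rpow_le hd4 hε ?_ ?_
    · calc d * log 2 = log ((2 ^ d : ℕ) : ℝ) := by push_cast; rw [log_pow]
        _ ≤ log (P * q : ℕ) := log_le_log (by positivity) (by exact_mod_cast hlow)
    · calc log (P * q : ℕ) ≤ log ((2 * d ^ (4 * d) : ℕ) : ℝ) :=
            log_le_log (by exact_mod_cast Nat.mul_pos hP.pos hqpos) (by exact_mod_cast hup)
        _ = log 2 + 4 * d * log d := by
            push_cast
            rw [log_mul two_ne_zero (by positivity), log_pow]
            push_cast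
            ring
        _ ≤ 6 * d * log d := by
            have hlogd0 : 0 ≤ log d := (log_pos one_lt_two).le.trans hlogd
            nlinarith [mul_nonneg (by linarith : (0 : ℝ) ≤ d - 1) hlogd0]
  rw [testSymbol, symbolNorm2_indicator_one ε (primeFactorsList_length_eq_two_of_mem_image hQ hP),
    Finset.sum_image fun q _ q' _ h => Nat.eq_of_mul_eq_mul_left hP.pos h]
  calc ∑ q ∈ Q, ENNReal.ofReal (log (P * q : ℕ) / log (log (P * q : ℕ)) ^ (1 + ε))
      ≤ ∑ _q ∈ Q, ENNReal.ofReal (12 * d / (log d / 2) ^ ε) :=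
        Finset.sum_le_sum fun q hq => ENNReal.ofReal_le_ofReal (hterm q hq)
    _ = ENNReal.ofReal (12 * d ^ 2 / (log d / 2) ^ ε) := by
        rw [Finset.sum_const, ← hd_def, nsmul_eq_mul, ← ENNReal.ofReal_natCast,
          ← ENNReal.ofReal_mul (Nat.cast_nonneg _)]
        ring_nf

lemma volterraCoeff_testSymbol_testFunction (hQ : ∀ q ∈ Q, q.Prime) {P : ℕ} (hP : 0 < P)
    {j : ℕ} {T : Finset ℕ} (hT : T ⊆ Q) (hTcard : T.card = j + 1) :
    volterraCoeff (testSymbol P Q) (testFunction Q j) (P * ∏ q ∈ T, q) =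
      ((∑ q ∈ T, Real.log (P * q : ℕ) : ℝ) : ℂ) := by
  have hTprime : ∀ q ∈ T, q.Prime := fun q hq => hQ q (hT hq)
  have hn : P * ∏ q ∈ T, q ≠ 0 := mul_ne_zero hP.ne' (Nat.prod_primes_ne_zero hTprime)
  have himg : T.image (P * ·) ⊆ (P * ∏ q ∈ T, q).divisors.filter (2 ≤ ·) := by
    simp only [Finset.subset_iff, Finset.mem_image, Finset.mem_filter, Nat.mem_divisors]
    rintro _ ⟨q, hq, rfl⟩
    exact ⟨⟨mul_dvd_mul_left P (Finset.dvd_prod_of_mem _ hq), hn⟩,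
      (hTprime q hq).two_le.trans (Nat.le_mul_of_pos_left q hP)⟩
  -- `P * q ∣ P * ∏ T` with `q` prime forces `q ∈ T`, so only the divisors `P * q`, `q ∈ T` count
  have hvanish : ∀ k ∈ (P * ∏ q ∈ T, q).divisors.filter (2 ≤ ·), k ∉ T.image (P * ·) →
      (Real.log k : ℂ) * testSymbol P Q k * testFunction Q j ((P * ∏ q ∈ T, q) / k) = 0 := by
    intro k hk hkT
    suffices testSymbol P Q k = 0 by rw [this, mul_zero, zero_mul]
    refine Set.indicator_of_notMem (fun hkQ => hkT ?_) _
    obtain ⟨q, hq, rfl⟩ := Finset.mem_image.1 hkQ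
    have hdvd : q ∣ ∏ q ∈ T, q :=
      (Nat.mul_dvd_mul_iff_left hP).1 (Nat.dvd_of_mem_divisors (Finset.mem_filter.1 hk).1)
    have hqT : q ∈ (∏ q ∈ T, q).primeFactors :=
      Nat.mem_primeFactors.2 ⟨hQ q hq, hdvd, Nat.prod_primes_ne_zero hTprime⟩
    rw [Nat.primeFactors_prod hTprime] at hqT
    exact Finset.mem_image_of_mem _ hqT
  rw [volterraCoeff, ← Finset.sum_subset himg hvanish,
    Finset.sum_image fun q _ q' _ h => Nat.eq_of_mul_eq_mul_left hP h, Complex.ofReal_sum]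
  refine Finset.sum_congr rfl fun q hq => ?_
  have hquot : (P * ∏ q ∈ T, q) / (P * q) = ∏ r ∈ T.erase q, r := by
    rw [← Finset.mul_prod_erase T _ hq, ← mul_assoc,
      Nat.mul_div_cancel_left _ (Nat.mul_pos hP (hTprime q hq).pos)]
  have hsymbol : testSymbol P Q (P * q) = 1 :=
    Set.indicator_of_mem (Finset.mem_image_of_mem _ (hT hq)) _
  have hfunction : testFunction Q j (∏ r ∈ T.erase q, r) = 1 := by
    refine Set.indicator_of_mem (Finset.mem_image_of_mem _ (Finset.mem_powersetCard.2
      ⟨(Finset.erase_subset q T).trans hT, ?_⟩)) _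
    rw [Finset.card_erase_of_mem hq, hTcard, Nat.add_sub_cancel]
  rw [hquot, hsymbol, hfunction, mul_one, mul_one]

open Real in
lemma div_le_volterraTerm_testSymbol_testFunction (hQ : ∀ q ∈ Q, q.Prime) {β δ : ℝ}
    {w : ℕ → ℝ} (hw : IsAdmissible β w δ) (hδ : 0 < 1 + δ) {P : ℕ} (hP : P.Prime)
    (hNP : ∏ q ∈ Q, q < P) {j : ℕ} {T : Finset ℕ} (hT : T ⊆ Q) (hTcard : T.card = j + 1) :
    ((j : ℝ) + 1) ^ 2 / (4 * (1 + δ) ^ (j + 2)) ≤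
      ‖volterraCoeff (testSymbol P Q) (testFunction Q j) (P * ∏ q ∈ T, q)‖ ^ 2 /
        (w (P * ∏ q ∈ T, q) * log (P * ∏ q ∈ T, q : ℕ) ^ 2) := by
  have hTprime : ∀ q ∈ T, q.Prime := fun q hq => hQ q (hT hq)
  have hTpos : 0 < ∏ q ∈ T, q := Nat.pos_of_ne_zero (Nat.prod_primes_ne_zero hTprime)
  have hTP : ∏ q ∈ T, q < P :=
    (Nat.le_of_dvd (Nat.pos_of_ne_zero (Nat.prod_primes_ne_zero hQ))
      (Finset.prod_dvd_prod_of_subset _ _ _ hT)).trans_lt hNP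
  have hlogP : 0 < log P := log_pos (by exact_mod_cast hP.one_lt)
  have hsum : ((j : ℝ) + 1) * log P ≤ ∑ q ∈ T, log (P * q : ℕ) := by
    have := Finset.card_nsmul_le_sum T (fun q => log (P * q : ℕ)) (log P) fun q hq =>
      log_le_log (by exact_mod_cast hP.pos)
        (by exact_mod_cast Nat.le_mul_of_pos_right P (hTprime q hq).pos)
    rwa [hTcard, nsmul_eq_mul, Nat.cast_add, Nat.cast_one] at this
  have hweight : w (P * ∏ q ∈ T, q) = (1 + δ) ^ (j + 2) := by
    have hPT : P ∉ T := fun h => (hTP.trans_le' (Nat.le_of_dvd hTpos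
      (Finset.dvd_prod_of_mem _ h))).false
    rw [← Finset.prod_insert (f := fun q => q) hPT,
      hw.weight_prod_primes (Finset.forall_mem_insert _ _ _ |>.2 ⟨hP, hTprime⟩),
      Finset.card_insert_of_notMem hPT, hTcard]
  have hlog_pos : 0 < log (P * ∏ q ∈ T, q : ℕ) :=
    log_pos (by exact_mod_cast (hP.one_lt.trans_le (Nat.le_mul_of_pos_right P hTpos)))
  have hlog_le : log (P * ∏ q ∈ T, q : ℕ) ≤ 2 * log P := by
    rw [← log_rpow (by exact_mod_cast hP.pos), Real.rpow_two]
    exact log_le_log (by exact_mod_cast Nat.mul_pos hP.pos hTpos)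
      (by exact_mod_cast (Nat.mul_le_mul_left P hTP.le).trans_eq (sq P).symm)
  rw [volterraCoeff_testSymbol_testFunction hQ hP.pos hT hTcard, Complex.norm_real,
    Real.norm_of_nonneg ((mul_nonneg (by positivity) hlogP.le).trans hsum), hweight]
  calc ((j : ℝ) + 1) ^ 2 / (4 * (1 + δ) ^ (j + 2))
      = (((j : ℝ) + 1) * log P) ^ 2 / ((1 + δ) ^ (j + 2) * (2 * log P) ^ 2) := by
        field_simp
        ring
    _ ≤ _ := by gcongr

lemma le_volterraSumLHS_testSymbol_testFunction (hQ : ∀ q ∈ Q, q.Prime) {β δ : ℝ}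
    {w : ℕ → ℝ} (hw : IsAdmissible β w δ) (hδ : 0 < 1 + δ) {P : ℕ} (hP : P.Prime)
    (hNP : ∏ q ∈ Q, q < P) (j : ℕ) :
    ENNReal.ofReal (Q.card.choose (j + 1) * ((j : ℝ) + 1) ^ 2 / (4 * (1 + δ) ^ (j + 2))) ≤
      volterraSumLHS w (testSymbol P Q) (testFunction Q j) := by
  have hprimes : ∀ T ∈ Q.powersetCard (j + 1), ∀ p ∈ T, p.Prime :=
    fun T hT p hp => hQ p ((Finset.mem_powersetCard.1 hT).1 hp)
  have hinj : Set.InjOn (fun T => P * ∏ q ∈ T, q) ↑(Q.powersetCard (j + 1)) :=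
    fun T hT T' hT' h => Nat.prod_primes_injOn (hprimes T hT) (hprimes T' hT')
      (Nat.eq_of_mul_eq_mul_left hP.pos h)
  have htwo : ∀ T ∈ Q.powersetCard (j + 1), 2 ≤ P * ∏ q ∈ T, q := fun T hT =>
    hP.two_le.trans (Nat.le_mul_of_pos_right P
      (Nat.pos_of_ne_zero (Nat.prod_primes_ne_zero (hprimes T hT))))
  calc ENNReal.ofReal (Q.card.choose (j + 1) * ((j : ℝ) + 1) ^ 2 / (4 * (1 + δ) ^ (j + 2)))
      = ∑ _T ∈ Q.powersetCard (j + 1), ENNReal.ofReal (((j : ℝ) + 1) ^ 2 / (4 * (1 + δ) ^ (j + 2)))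
        := by
        rw [Finset.sum_const, Finset.card_powersetCard, nsmul_eq_mul, mul_div_assoc,
          ENNReal.ofReal_mul (Nat.cast_nonneg _), ENNReal.ofReal_natCast]
    _ ≤ _ := Finset.sum_le_sum fun T hT => ENNReal.ofReal_le_ofReal <|
        div_le_volterraTerm_testSymbol_testFunction hQ hw hδ hP hNP
          (Finset.mem_powersetCard.1 hT).1 (Finset.mem_powersetCard.1 hT).2
    _ ≤ _ := sum_le_volterraSumLHS w _ _ hinj htwo

end TestPair

theorem statement14_general (β : ℝ) (hβ : 0 < β) (w : ℕ → ℝ) (δ : ℝ)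
    (hw : IsAdmissible β w δ) (ε : ℝ) (hε : 0 < ε) (C : ℝ) :
    ∃ b : ℕ → ℂ, (∀ n, b n ≠ 0 → n.primeFactorsList.length = 2) ∧
      (∑' n : ℕ, if n.primeFactorsList.length = 2 then
          ENNReal.ofReal
            (‖b n‖ ^ 2 * Real.log n / (Real.log (Real.log n)) ^ (1 + ε))
        else 0) ≠ ⊤ ∧
      ∃ aa : ℕ → ℂ, (Function.support aa).Finite ∧
        ENNReal.ofReal (C ^ 2) *
            (∑' n : ℕ, if n.primeFactorsList.length = 2 then
              ENNReal.ofReal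
                (‖b n‖ ^ 2 * Real.log n / (Real.log (Real.log n)) ^ (1 + ε))
            else 0) *
            hNorm2 w aa
          < volterraSumLHS w b aa := by
  have hδ : 0 < 1 + δ := hw.one_add_pos (by linarith)
  have hlarge : ∀ᶠ d : ℕ in atTop, 4 ≤ d ∧ 192 * C ^ 2 * (1 + δ) ^ 2 < (Real.log d / 2) ^ ε :=
    (eventually_ge_atTop 4).and <| ((tendsto_rpow_atTop hε).comp
      ((Real.tendsto_log_atTop.comp tendsto_natCast_atTop_atTop).atTop_div_const two_pos)
      ).eventually_gt_atTop _
  obtain ⟨d, ⟨Q, hQ, rfl, hQsq⟩, hd, hX⟩ :=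
    (Nat.frequently_exists_primes_le_sq.and_eventually hlarge).exists
  obtain ⟨P, hP, hNP, hPN⟩ := Nat.exists_prime_lt_and_le_two_mul _ (Nat.prod_primes_ne_zero hQ)
  have hsymbol := symbolNorm2_testSymbol_le hQ hd hQsq hP hNP hPN (by linarith : 0 ≤ 1 + ε)
  refine ⟨testSymbol P Q, fun n hn => primeFactorsList_length_eq_two_of_mem_image hQ hP n
    (Set.mem_of_indicator_ne_zero hn), (hsymbol.trans_lt ENNReal.ofReal_lt_top).ne,
    testFunction Q (Q.card / 2), (Finset.finite_toSet _).subset Set.support_indicator_subset, ?_⟩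
  calc ENNReal.ofReal (C ^ 2) * symbolNorm2 ε (testSymbol P Q) *
          hNorm2 w (testFunction Q (Q.card / 2))
      ≤ ENNReal.ofReal (C ^ 2) * ENNReal.ofReal (12 * Q.card ^ 2 / (Real.log Q.card / 2) ^ ε) *
          ENNReal.ofReal (Q.card.choose (Q.card / 2) / (1 + δ) ^ (Q.card / 2)) := by
        rw [hNorm2_testFunction hQ hw]
        gcongr
    _ < _ := by
        rw [← ENNReal.ofReal_mul (by positivity), ← ENNReal.ofReal_mul (by positivity),
          ENNReal.ofReal_lt_ofReal_iff_of_nonneg (by positivity)]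
        exact mul_choose_half_div_lt_choose_succ_div (by omega) hδ hX
    _ ≤ _ := le_volterraSumLHS_testSymbol_testFunction hQ hw hδ hP hNP _

/-- Sharpness of the weight `(log n)/(log log n)` for 2-homogeneous
symbols: for every `ε > 0` and `C > 0`, there is a 2-homogeneous symbol `b` with
`∑_{Ω(n)=2} |b_n|²(log n)(log log n)^{−1−ε} < ∞` and a finitely supported sequence
violating the corresponding bound on `‖T_g‖`. (`Ω(n)` = number of prime factors of `n`
with multiplicity = `n.primeFactorsList.length`.) -/
theorem statement14 (β : ℝ) (hβ : 0 < β) (w : ℕ → ℝ) (δ : ℝ)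
    (hw : IsAdmissible β w δ) (ε : ℝ) (hε : 0 < ε) (C : ℝ) (hC : 0 < C) :
    ∃ b : ℕ → ℂ, (∀ n, b n ≠ 0 → n.primeFactorsList.length = 2) ∧
      (∑' n : ℕ, if n.primeFactorsList.length = 2 then
          ENNReal.ofReal
            (‖b n‖ ^ 2 * Real.log n / (Real.log (Real.log n)) ^ (1 + ε))
        else 0) ≠ ⊤ ∧
      ∃ aa : ℕ → ℂ, (Function.support aa).Finite ∧
        ENNReal.ofReal (C ^ 2) *
            (∑' n : ℕ, if n.primeFactorsList.length = 2 then
              ENNReal.ofReal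
                (‖b n‖ ^ 2 * Real.log n / (Real.log (Real.log n)) ^ (1 + ε))
            else 0) *
            hNorm2 w aa
          < volterraSumLHS w b aa :=
  statement14_general β hβ w δ hw ε hε C
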